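/- Let ψ : (0,∞) → (0,∞) be a smooth decreasing function with ψ(0⁺) = ∞ (e.g. ψ(s) = M(s) with M(0⁺)=∞), and let A(s) = ∫_0^s ψ((z/ω_N)^{1/N}) dz. If A'(0⁺) = ∞ and liminf_{s→0⁺} A'(s)A'''(s)/(A''(s))² > 1, then for every p ≥ 1 there exists a function u ∈ L^p(Ω) with u vanishing outside Ω such that p∫_0^∞ A(μ_u(t)) t^{p−1} dt = ∞; i.e., the Lorentz-type space L_{A,p}(Ω) is strictly contained in L^p(Ω). -/

import Mathlib

open MeasureTheory ENNReal Set Metric Filter Topology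

set_option maxHeartbeats 2000000 in
/-- Strict inclusion of the Lorentz-type space in `L^p`: if `ψ` is smooth, decreasing,
with `ψ(0⁺) = ∞`, `A(s) = ∫_0^s ψ((z/ω_N)^{1/N}) dz`, `A'(0⁺) = ∞` and
`liminf_{s→0⁺} A'A'''/(A'')² > 1`, then for every `p ≥ 1` there is `u ∈ L^p(Ω)`
vanishing outside `Ω` with `p∫_0^∞ A(μ_u(t)) t^{p-1} dt = ∞`. -/
theorem stmt_6 {N : ℕ} (hN : 0 < N)
    (Ω : Set (EuclideanSpace ℝ (Fin N)))
    (hΩbdd : Bornology.IsBounded Ω)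
    (hΩball : ∃ ρ > (0 : ℝ), Metric.ball (0 : EuclideanSpace ℝ (Fin N)) ρ ⊆ Ω)
    (ψ : ℝ → ℝ)
    (hψsmooth : ContDiffOn ℝ (⊤ : ℕ∞) ψ (Set.Ioi 0))
    (hψpos : ∀ s ∈ Set.Ioi (0 : ℝ), 0 < ψ s)
    (hψdec : StrictAntiOn ψ (Set.Ioi 0))
    (hψinf : Tendsto ψ (nhdsWithin 0 (Set.Ioi 0)) atTop)
    (ωN : ℝ) (hω : ωN = (volume (Metric.ball (0 : EuclideanSpace ℝ (Fin N)) 1)).toReal)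
    (A : ℝ → ℝ) (hA : ∀ s, A s = ∫ z in Set.Ioc 0 s, ψ ((z / ωN) ^ (1 / (N : ℝ))))
    (hA' : Tendsto (deriv A) (nhdsWithin 0 (Set.Ioi 0)) atTop)
    (hA3 : 1 < Filter.liminf
      (fun s => deriv A s * deriv (deriv (deriv A)) s / (deriv (deriv A) s) ^ 2)
      (nhdsWithin 0 (Set.Ioi 0)))
    (p : ℝ) (hp : 1 ≤ p) :
    ∃ u : EuclideanSpace ℝ (Fin N) → ℝ,
      Measurable u ∧ (∀ x ∉ Ω, u x = 0) ∧
      MeasureTheory.MemLp u (ENNReal.ofReal p) volume ∧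
      ENNReal.ofReal p * ∫⁻ t in Set.Ioi (0 : ℝ),
        ENNReal.ofReal (A ((volume {x | t < u x}).toReal) * t ^ (p - 1)) = ⊤ := by
  obtain ⟨ρ, hρ, hρΩ⟩ := hΩball
  haveI : NeZero N := ⟨hN.ne'⟩
  have hNR : (0:ℝ) < N := Nat.cast_pos.mpr hN
  have hNinv : (0:ℝ) < 1/(N:ℝ) := by positivity
  have hp0 : (0:ℝ) < p := lt_of_lt_of_le one_pos hp
  have hball_ne_top : volume (ball (0 : EuclideanSpace ℝ (Fin N)) 1) ≠ ⊤ := measure_ball_lt_top.ne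
  have hωN : 0 < ωN := by
    rw [hω]
    exact ENNReal.toReal_pos (measure_ball_pos volume 0 one_pos).ne' hball_ne_top
  set φ : ℝ → ℝ := fun z => ψ ((z / ωN) ^ (1 / (N:ℝ))) with hφdef
  have hA2 : ∀ s, A s = ∫ z in Ioc 0 s, φ z := hA
  have harg_pos : ∀ z : ℝ, 0 < z → 0 < (z / ωN) ^ (1 / (N:ℝ)) := fun z hz =>
    Real.rpow_pos_of_pos (div_pos hz hωN) _
  have harg_lt : ∀ z w : ℝ, 0 < z → z < w →
      (z / ωN) ^ (1/(N:ℝ)) < (w / ωN) ^ (1/(N:ℝ)) := by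
    intro z w hz hzw
    have h : z / ωN < w / ωN := by gcongr
    exact Real.rpow_lt_rpow (by positivity) h hNinv
  have hφ_pos : ∀ z : ℝ, 0 < z → 0 < φ z := fun z hz => hψpos _ (harg_pos z hz)
  have hφ_anti : ∀ z w : ℝ, 0 < z → z ≤ w → φ w ≤ φ z := by
    intro z w hz hzw
    rcases eq_or_lt_of_le hzw with rfl | h
    · exact le_rfl
    · exact (hψdec (harg_pos z hz) (harg_pos w (hz.trans h)) (harg_lt z w hz h)).le
  have hφ_tend : Tendsto φ (𝓝[>] (0:ℝ)) atTop := by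
    apply hψinf.comp
    rw [tendsto_nhdsWithin_iff]
    constructor
    · have hc : ContinuousAt (fun x : ℝ => x ^ (1/(N:ℝ))) 0 :=
        Real.continuousAt_rpow_const 0 _ (Or.inr hNinv.le)
      have h2 : Tendsto (fun z : ℝ => z / ωN) (𝓝[>] (0:ℝ)) (𝓝 0) := by
        have h3 : Tendsto (fun z : ℝ => z / ωN) (𝓝 (0:ℝ)) (𝓝 (0 / ωN)) :=
          (continuous_id.div_const ωN).tendsto 0
        rw [zero_div] at h3
        exact h3.mono_left nhdsWithin_le_nhds
      have h4 := hc.tendsto.comp h2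
      have h5 : (0:ℝ) ^ (1/(N:ℝ)) = 0 := Real.zero_rpow hNinv.ne'
      rw [h5] at h4
      exact h4
    · filter_upwards [self_mem_nhdsWithin] with z hz
      exact harg_pos z hz
  have hφ_cont : ContinuousOn φ (Ioi (0:ℝ)) := by
    apply (hψsmooth.continuousOn).comp
    · exact ((continuous_id.div_const ωN).continuousOn).rpow_const fun z _ => Or.inr hNinv.le
    · intro z hz; exact harg_pos z hz
  by_cases hInt : IntegrableOn φ (Ioc (0:ℝ) 1) volume
  case neg =>
    exfalso
    have hA0 : ∀ s, A s = 0 := by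
      intro s
      rw [hA2 s]
      rcases le_or_gt s 0 with hs | hs
      · rw [Ioc_eq_empty (by exact fun h => absurd (lt_of_lt_of_le h hs) (lt_irrefl 0))]
        simp
      · apply integral_undef
        intro hint
        have hint' : IntegrableOn φ (Ioc 0 s) volume := hint
        apply hInt
        rcases le_or_gt 1 s with h1 | h1
        · exact hint'.mono_set (Ioc_subset_Ioc_right h1)
        · have h2 : IntegrableOn φ (Ioc s 1) volume := by
            apply IntegrableOn.mono_set _ Ioc_subset_Icc_self
            exact ContinuousOn.integrableOn_compact isCompact_Icc
              (hφ_cont.mono (fun z hz => lt_of_lt_of_le hs hz.1))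
          have h3 := hint'.union h2
          apply h3.mono_set
          rw [Ioc_union_Ioc_eq_Ioc hs.le h1.le]
    have hAz : A = fun _ => (0:ℝ) := funext hA0
    rw [hAz] at hA'
    have hd : deriv (fun _ : ℝ => (0:ℝ)) = fun _ => 0 := by
      funext x; exact deriv_const x 0
    rw [hd] at hA'
    obtain ⟨s, hs⟩ := (hA'.eventually_ge_atTop 1).exists
    norm_num at hs
  case pos =>
  have hIntS : ∀ s : ℝ, 0 < s → IntegrableOn φ (Ioc 0 s) volume := by
    intro s hs
    rcases le_or_gt s 1 with h | h
    · exact hInt.mono_set (Ioc_subset_Ioc_right h)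
    · have h2 : IntegrableOn φ (Ioc 1 s) volume := by
        apply IntegrableOn.mono_set _ Ioc_subset_Icc_self
        exact ContinuousOn.integrableOn_compact isCompact_Icc
          (hφ_cont.mono (fun z hz => lt_of_lt_of_le one_pos hz.1))
      have h3 := hInt.union h2
      apply h3.mono_set
      rw [Ioc_union_Ioc_eq_Ioc zero_le_one h.le]
  have hA_mono : ∀ s t : ℝ, 0 < s → s ≤ t → A s ≤ A t := by
    intro s t hs hst
    rw [hA2 s, hA2 t]
    apply setIntegral_mono_set (hIntS t (lt_of_lt_of_le hs hst))
    · rw [EventuallyLE, ae_restrict_iff' measurableSet_Ioc]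
      exact ae_of_all _ fun z hz => (hφ_pos z hz.1).le
    · exact HasSubset.Subset.eventuallyLE (Ioc_subset_Ioc_right hst)
  have hA_lb : ∀ s : ℝ, 0 < s → s * φ s ≤ A s := by
    intro s hs
    rw [hA2 s]
    have hconst : ∫ _ in Ioc (0:ℝ) s, φ s = s * φ s := by
      rw [setIntegral_const, measureReal_def, Real.volume_Ioc, ENNReal.toReal_ofReal (by linarith)]
      simp [smul_eq_mul]
    rw [← hconst]
    apply setIntegral_mono_on
    · exact integrableOn_const (by rw [Real.volume_Ioc]; exact ofReal_ne_top)
    · exact hIntS s hs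
    · exact measurableSet_Ioc
    · intro z hz
      exact hφ_anti z s hz.1 hz.2
  have hA_pos : ∀ s : ℝ, 0 < s → 0 < A s := fun s hs =>
    lt_of_lt_of_le (mul_pos hs (hφ_pos s hs)) (hA_lb s hs)
  have hth : ∀ j : ℕ, ∃ n : ℕ, ∀ s : ℝ, 0 < s → s ≤ ((2:ℝ)⁻¹) ^ n → ((j:ℝ)+1)^2 ≤ φ s := by
    intro j
    have hev : ∀ᶠ s in 𝓝[>] (0:ℝ), ((j:ℝ)+1)^2 ≤ φ s := hφ_tend.eventually_ge_atTop _
    obtain ⟨ε, hε, hsub⟩ := mem_nhdsGT_iff_exists_Ioc_subset.mp hev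
    obtain ⟨n, hn⟩ := exists_pow_lt_of_lt_one hε (by norm_num : (2:ℝ)⁻¹ < 1)
    exact ⟨n, fun s hs hsle => hsub ⟨hs, hsle.trans hn.le⟩⟩
  choose NN hNN using hth
  obtain ⟨M, hM⟩ := exists_pow_lt_of_lt_one
    (show (0:ℝ) < (ωN * ρ^(N:ℕ))/2 by positivity) (by norm_num : (2:ℝ)⁻¹ < 1)
  set K : ℕ → ℕ := fun j => Nat.rec (max (NN 0) M) (fun j ih => max (NN (j+1)) (ih+1)) j
    with hKdef
  have hK0 : K 0 = max (NN 0) M := rfl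
  have hKs : ∀ j, K (j+1) = max (NN (j+1)) (K j + 1) := fun j => rfl
  have hKNN : ∀ j, NN j ≤ K j := by
    intro j
    cases j with
    | zero => exact le_max_left _ _
    | succ n => rw [hKs n]; exact le_max_left _ _
  have hKM : M ≤ K 0 := le_max_right _ _
  have hKsucc : ∀ j, K j + 1 ≤ K (j+1) := fun j => by rw [hKs j]; exact le_max_right _ _
  have hKadd : ∀ j i, K j + i ≤ K (j + i) := by
    intro j i
    induction i with
    | zero => simp
    | succ i ih =>
      calc K j + (i+1) = (K j + i) + 1 := by ring
      _ ≤ K (j+i) + 1 := by omega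
      _ ≤ K (j+i+1) := hKsucc _
  have hKid : ∀ j, j ≤ K j := by
    intro j
    have h := hKadd 0 j
    simp only [zero_add] at h
    omega
  have hrpow_nat : ∀ n : ℕ, (2:ℝ) ^ (-(n:ℝ)) = ((2:ℝ)⁻¹)^n := by
    intro n
    rw [Real.rpow_neg (by norm_num), Real.rpow_natCast, inv_pow]
  have hrpow_mono : ∀ x y : ℝ, x ≤ y → (2:ℝ)^x ≤ (2:ℝ)^y := by
    intro x y h
    exact Real.rpow_le_rpow_left_iff (by norm_num : (1:ℝ) < 2) |>.mpr h
  set a : ℕ → ℝ := fun j => (2:ℝ)^(-(K j:ℝ)) / ((j:ℝ)+1)^2 with hadef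
  have ha_pos : ∀ j, 0 < a j := by
    intro j
    apply div_pos (Real.rpow_pos_of_pos (by norm_num) _)
    positivity
  have ha_le : ∀ j, a j ≤ (2:ℝ)^(-(K j:ℝ)) := by
    intro j
    apply div_le_self (Real.rpow_pos_of_pos (by norm_num) _).le
    nlinarith [Nat.cast_nonneg (α := ℝ) j]
  have hφa : ∀ j : ℕ, ((j:ℝ)+1)^2 ≤ φ (a j) := by
    intro j
    apply hNN j (a j) (ha_pos j)
    calc a j ≤ (2:ℝ)^(-(K j:ℝ)) := ha_le j
    _ ≤ (2:ℝ)^(-(NN j:ℝ)) := hrpow_mono _ _ (by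
        have h := hKNN j
        simp only [neg_le_neg_iff]
        exact_mod_cast h)
    _ = ((2:ℝ)⁻¹)^(NN j) := hrpow_nat _
  have ha_sum : Summable a := by
    apply Summable.of_nonneg_of_le (fun j => (ha_pos j).le)
      (fun j => ?_) (summable_geometric_of_lt_one (by norm_num : (0:ℝ) ≤ 2⁻¹) (by norm_num))
    calc a j ≤ (2:ℝ)^(-(K j:ℝ)) := ha_le j
    _ ≤ (2:ℝ)^(-(j:ℝ)) := hrpow_mono _ _ (by
        have h := hKid j
        simp only [neg_le_neg_iff]
        exact_mod_cast h)
    _ = ((2:ℝ)⁻¹)^j := hrpow_nat _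
  set T : ℕ → ℝ := fun j => ∑' i : ℕ, a (j + i) with hTdef
  have hTsum : ∀ j, Summable (fun i => a (j + i)) := by
    intro j
    have h := (summable_nat_add_iff (f := a) j).mpr ha_sum
    simpa [add_comm] using h
  have hT_rec : ∀ j, T j = a j + T (j+1) := by
    intro j
    have h : T j = a (j + 0) + ∑' i : ℕ, a (j + (i + 1)) := Summable.tsum_eq_zero_add (hTsum j)
    have h2 : (∑' i : ℕ, a (j + (i + 1))) = T (j+1) := by
      apply tsum_congr
      intro i
      have he : j + (i + 1) = (j + 1) + i := by omega
      rw [he]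
    rw [h, h2, add_zero]
  have hT_ge : ∀ j, a j ≤ T j := by
    intro j
    have h : a (j + 0) ≤ T j := Summable.le_tsum (hTsum j) 0 (fun i _ => (ha_pos _).le)
    simpa using h
  have hT_pos : ∀ j, 0 < T j := fun j => lt_of_lt_of_le (ha_pos j) (hT_ge j)
  have hT_le : ∀ j, T j ≤ 2 * a j := by
    intro j
    have hb : ∀ i : ℕ, a (j + i) ≤ a j * ((2:ℝ)⁻¹)^i := by
      intro i
      rw [hadef]
      simp only []
      rw [div_mul_eq_mul_div]
      apply div_le_div₀ (by positivity)
      · calc (2:ℝ)^(-(K (j+i):ℝ)) ≤ (2:ℝ)^(-((K j + i:ℕ):ℝ)) := by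
              apply hrpow_mono
              have h := hKadd j i
              simp only [neg_le_neg_iff]
              exact_mod_cast h
          _ = (2:ℝ)^(-(K j:ℝ)) * ((2:ℝ)⁻¹)^i := by
              rw [← hrpow_nat, ← Real.rpow_add (by norm_num : (0:ℝ) < 2)]
              congr 1
              push_cast
              ring
      · positivity
      · apply pow_le_pow_left₀ (by positivity)
        push_cast
        linarith [Nat.cast_nonneg (α := ℝ) i]
    calc T j ≤ ∑' i : ℕ, a j * ((2:ℝ)⁻¹)^i := by
          apply Summable.tsum_le_tsum hb (hTsum j)
          exact (summable_geometric_of_lt_one (by norm_num) (by norm_num)).mul_left _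
      _ = a j * (1 - 2⁻¹)⁻¹ := by
          rw [tsum_mul_left, tsum_geometric_of_lt_one (by norm_num) (by norm_num)]
      _ = 2 * a j := by
          norm_num
          ring
  have hT_anti : Antitone T := by
    apply antitone_nat_of_succ_le
    intro j
    rw [hT_rec j]
    linarith [ha_pos j]
  have hT_cap : T 0 ≤ ωN * ρ^(N:ℕ) := by
    calc T 0 ≤ 2 * a 0 := hT_le 0
      _ ≤ 2 * (2:ℝ)^(-(K 0:ℝ)) := by linarith [ha_le 0, ha_pos 0]
      _ ≤ 2 * ((2:ℝ)⁻¹)^M := by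
          have h : (2:ℝ)^(-(K 0:ℝ)) ≤ (2:ℝ)^(-(M:ℝ)) := hrpow_mono _ _ (by
            simp only [neg_le_neg_iff]; exact_mod_cast hKM)
          rw [hrpow_nat M] at h
          linarith
      _ ≤ ωN * ρ^(N:ℕ) := by linarith [hM]
  have hK_lt : StrictMono K := strictMono_nat_of_lt_succ
    (fun n => lt_of_lt_of_le (Nat.lt_succ_self _) (hKsucc n))
  set R : ℕ → ℝ := fun j => (T j / ωN) ^ (1/(N:ℝ)) with hRdef
  have hR_pos : ∀ j, 0 < R j := fun j => Real.rpow_pos_of_pos (div_pos (hT_pos j) hωN) _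
  have hR_anti : ∀ i j : ℕ, i ≤ j → R j ≤ R i := by
    intro i j hij
    apply Real.rpow_le_rpow (div_nonneg (hT_pos j).le hωN.le) _ hNinv.le
    have h := hT_anti hij
    gcongr
  have hpow_inv : ∀ x : ℝ, 0 ≤ x → ((x^(N:ℕ)):ℝ) ^ (1/(N:ℝ)) = x := by
    intro x hx
    rw [← Real.rpow_natCast x N, ← Real.rpow_mul hx, mul_one_div,
      div_self (by exact_mod_cast hN.ne' : (N:ℝ) ≠ 0), Real.rpow_one]
  have hinv_pow : ∀ y : ℝ, 0 ≤ y → (y ^ (1/(N:ℝ))) ^ (N:ℕ) = y := by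
    intro y hy
    rw [← Real.rpow_natCast (y ^ (1/(N:ℝ))) N, ← Real.rpow_mul hy]
    have h1 : (1/(N:ℝ)) * (N:ℝ) = 1 := by
      field_simp
    rw [h1, Real.rpow_one]
  have hR0 : R 0 ≤ ρ := by
    have h1 : T 0 / ωN ≤ ρ^(N:ℕ) := by
      rw [div_le_iff₀ hωN, mul_comm]
      exact hT_cap
    calc R 0 ≤ (ρ^(N:ℕ)) ^ (1/(N:ℝ)) :=
        Real.rpow_le_rpow (div_nonneg (hT_pos 0).le hωN.le) h1 hNinv.le
      _ = ρ := hpow_inv ρ hρ.le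
  have hR_small : ∀ r : ℝ, 0 < r → ∃ i, R i ≤ r := by
    intro r hr
    obtain ⟨i, hi⟩ := exists_pow_lt_of_lt_one
      (show (0:ℝ) < (ωN * r^(N:ℕ))/2 by positivity) (by norm_num : (2:ℝ)⁻¹ < 1)
    refine ⟨i, ?_⟩
    have h1 : (2:ℝ)^(-(K i:ℝ)) ≤ ((2:ℝ)⁻¹)^i := by
      rw [← hrpow_nat i]
      apply hrpow_mono
      simp only [neg_le_neg_iff]
      exact_mod_cast hKid i
    have hTi : T i ≤ ωN * r^(N:ℕ) := by
      linarith [hT_le i, ha_le i, h1, hi]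
    have h2 : T i / ωN ≤ r^(N:ℕ) := by
      rw [div_le_iff₀ hωN, mul_comm]
      exact hTi
    calc R i ≤ (r^(N:ℕ)) ^ (1/(N:ℝ)) :=
        Real.rpow_le_rpow (div_nonneg (hT_pos i).le hωN.le) h2 hNinv.le
      _ = r := hpow_inv r hr.le
  set v : ℕ → ℝ := fun j => (2:ℝ) ^ ((K j : ℝ)/p) with hvdef
  have hv_pos : ∀ j, 0 < v j := fun j => Real.rpow_pos_of_pos (by norm_num) _
  have hv_lt : ∀ i j : ℕ, i < j → v i < v j := by
    intro i j hij
    apply (Real.rpow_lt_rpow_left_iff (by norm_num : (1:ℝ) < 2)).mpr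
    have h : (K i : ℝ) < K j := by exact_mod_cast hK_lt hij
    gcongr
  have hv_le : ∀ i j : ℕ, i ≤ j → v i ≤ v j := by
    intro i j hij
    rcases eq_or_lt_of_le hij with rfl | h
    · exact le_rfl
    · exact (hv_lt i j h).le
  have hv_pow : ∀ j, v j ^ p = (2:ℝ) ^ (K j:ℝ) := by
    intro j
    simp only [hvdef]
    rw [← Real.rpow_mul (by norm_num : (0:ℝ) ≤ 2), div_mul_cancel₀ _ hp0.ne']
  set gE : ℝ → ℝ≥0∞ := fun r =>
    ∑' i : ℕ, (Ico (R (i+1)) (R i)).indicator (fun _ => ENNReal.ofReal (v i)) r with hgdef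
  set u : EuclideanSpace ℝ (Fin N) → ℝ := fun x => (gE ‖x‖).toReal with hudef
  have hu_meas : Measurable u := by
    apply Measurable.ennreal_toReal
    exact (Measurable.ennreal_tsum fun i =>
      measurable_const.indicator measurableSet_Ico).comp measurable_norm
  have hIco_disj : ∀ (i i' : ℕ) (r : ℝ), i ≠ i' → r ∈ Ico (R (i+1)) (R i) →
      r ∉ Ico (R (i'+1)) (R i') := by
    intro i i' r hne h1 h2
    rcases lt_or_gt_of_ne hne with h | h
    · exact absurd (lt_of_lt_of_le h2.2 (hR_anti _ _ (by omega))) (not_lt.mpr h1.1)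
    · exact absurd (lt_of_lt_of_le h1.2 (hR_anti _ _ (by omega))) (not_lt.mpr h2.1)
  have hg_on : ∀ (i : ℕ) (r : ℝ), r ∈ Ico (R (i+1)) (R i) →
      gE r = ENNReal.ofReal (v i) := by
    intro i r hr
    simp only [hgdef]
    rw [tsum_eq_single i]
    · rw [indicator_of_mem hr]
    · intro i' hne
      exact indicator_of_notMem (hIco_disj i i' r (Ne.symm hne) hr) _
  have hu_on : ∀ (i : ℕ) (x : EuclideanSpace ℝ (Fin N)), ‖x‖ ∈ Ico (R (i+1)) (R i) →
      u x = v i := by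
    intro i x hx
    simp only [hudef]
    rw [hg_on i _ hx, ENNReal.toReal_ofReal (hv_pos i).le]
  have hg_off : ∀ r : ℝ, (∀ i : ℕ, r ∉ Ico (R (i+1)) (R i)) → gE r = 0 := by
    intro r hr
    simp only [hgdef]
    have h : ∀ i : ℕ, (Ico (R (i+1)) (R i)).indicator
        (fun _ => ENNReal.ofReal (v i)) r = 0 := fun i => indicator_of_notMem (hr i) _
    rw [tsum_congr h]
    exact tsum_zero
  have hu_cases : ∀ x : EuclideanSpace ℝ (Fin N),
      u x = 0 ∨ ∃ i, ‖x‖ ∈ Ico (R (i+1)) (R i) ∧ u x = v i := by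
    intro x
    by_cases h : ∃ i : ℕ, ‖x‖ ∈ Ico (R (i+1)) (R i)
    · obtain ⟨i, hi⟩ := h
      exact Or.inr ⟨i, hi, hu_on i x hi⟩
    · push_neg at h
      left
      simp only [hudef]
      rw [hg_off _ h]
      rfl
  have hu_zero : ∀ x ∉ Ω, u x = 0 := by
    intro x hx
    rcases hu_cases x with h | ⟨i, hi, hval⟩
    · exact h
    · exfalso
      apply hx
      apply hρΩ
      rw [mem_ball_zero_iff]
      calc ‖x‖ < R i := hi.2
        _ ≤ R 0 := hR_anti 0 i (Nat.zero_le i)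
        _ ≤ ρ := hR0
  have hfind : ∀ (j : ℕ) (r : ℝ), 0 < r → r < R (j+1) →
      ∃ i, j+1 ≤ i ∧ r ∈ Ico (R (i+1)) (R i) := by
    intro j r hr hrR
    classical
    have hex : ∃ i, R i ≤ r := hR_small r hr
    have hi0 : R (Nat.find hex) ≤ r := Nat.find_spec hex
    have hi0_gt : j+1 < Nat.find hex := by
      rcases lt_or_ge (j+1) (Nat.find hex) with h | h
      · exact h
      · exact absurd (le_trans (hR_anti _ _ h) hi0) (not_le.mpr hrR)
    refine ⟨Nat.find hex - 1, by omega, ?_, ?_⟩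
    · have he : Nat.find hex - 1 + 1 = Nat.find hex := by omega
      rw [he]
      exact hi0
    · exact not_le.mp (Nat.find_min hex (by omega))
  have hset : ∀ (j : ℕ) (t : ℝ), t ∈ Ico (v j) (v (j+1)) →
      {x : EuclideanSpace ℝ (Fin N) | t < u x} =
        ball (0:EuclideanSpace ℝ (Fin N)) (R (j+1)) \ {0} := by
    intro j t ht
    ext x
    simp only [mem_setOf_eq, mem_diff, mem_ball_zero_iff, mem_singleton_iff]
    constructor
    · intro htu
      rcases hu_cases x with h0 | ⟨i, hi, hval⟩
      · rw [h0] at htu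
        exact absurd htu (by linarith [hv_pos j, ht.1])
      · rw [hval] at htu
        have hij : j < i := by
          by_contra hc
          push_neg at hc
          exact absurd htu (by linarith [hv_le i j hc, ht.1])
        constructor
        · exact lt_of_lt_of_le hi.2 (hR_anti (j+1) i (by omega))
        · intro h0
          have h1 := hi.1
          rw [h0, norm_zero] at h1
          exact absurd h1 (not_le.mpr (hR_pos (i+1)))
    · rintro ⟨hlt, hne⟩
      have hnorm : 0 < ‖x‖ := norm_pos_iff.mpr hne
      obtain ⟨i, hji, hi⟩ := hfind j ‖x‖ hnorm hlt
      rw [hu_on i x hi]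
      exact lt_of_lt_of_le ht.2 (hv_le (j+1) i hji)
  have hball_eq : volume (ball (0:EuclideanSpace ℝ (Fin N)) 1) = ENNReal.ofReal ωN := by
    rw [hω, ENNReal.ofReal_toReal hball_ne_top]
  have hvol_ball : ∀ j, volume (ball (0:EuclideanSpace ℝ (Fin N)) (R j))
      = ENNReal.ofReal (T j) := by
    intro j
    rw [Measure.addHaar_ball volume 0 (hR_pos j).le, finrank_euclideanSpace_fin]
    simp only [hRdef]
    rw [hinv_pow (T j / ωN) (div_nonneg (hT_pos j).le hωN.le), hball_eq,
      ← ENNReal.ofReal_mul (div_nonneg (hT_pos j).le hωN.le), div_mul_cancel₀ _ hωN.ne']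
  have hvol0 : volume ({0} : Set (EuclideanSpace ℝ (Fin N))) = 0 := measure_singleton 0
  have hμ : ∀ (j : ℕ) (t : ℝ), t ∈ Ico (v j) (v (j+1)) →
      (volume {x : EuclideanSpace ℝ (Fin N) | t < u x}).toReal = T (j+1) := by
    intro j t ht
    rw [hset j t ht, measure_diff_null hvol0, hvol_ball (j+1),
      ENNReal.toReal_ofReal (hT_pos (j+1)).le]
  -- Memℒp
  have hq0 : (ENNReal.ofReal p) ≠ 0 := by
    simp only [ne_eq, ENNReal.ofReal_eq_zero, not_le]
    linarith
  have hqt : (ENNReal.ofReal p) ≠ ⊤ := ENNReal.ofReal_ne_top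
  have hAnn_meas : ∀ j : ℕ,
      MeasurableSet {x : EuclideanSpace ℝ (Fin N) | ‖x‖ ∈ Ico (R (j+1)) (R j)} :=
    fun j => measurable_norm measurableSet_Ico
  have hAnn_sub : ∀ j : ℕ, {x : EuclideanSpace ℝ (Fin N) | ‖x‖ ∈ Ico (R (j+1)) (R j)} ⊆
      ball (0:EuclideanSpace ℝ (Fin N)) (R j) := by
    intro j x hx
    rw [mem_ball_zero_iff]
    exact hx.2
  set F : ℕ → EuclideanSpace ℝ (Fin N) → ℝ≥0∞ := fun j =>
    ({x : EuclideanSpace ℝ (Fin N) | ‖x‖ ∈ Ico (R (j+1)) (R j)}).indicator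
      (fun _ => ENNReal.ofReal ((2:ℝ) ^ (K j:ℝ))) with hFdef
  have hlint : ∫⁻ x, (‖u x‖₊ : ℝ≥0∞) ^ p < ⊤ := by
    have hpt : ∀ x, (‖u x‖₊ : ℝ≥0∞) ^ p ≤ ∑' j : ℕ, F j x := by
      intro x
      rcases hu_cases x with h0 | ⟨i, hi, hval⟩
      · rw [h0]
        have hz : ((‖(0:ℝ)‖₊ : ℝ≥0∞)) ^ p = 0 := by
          simp only [nnnorm_zero, ENNReal.coe_zero]
          exact ENNReal.zero_rpow_of_pos hp0
        rw [hz]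
        exact zero_le
      · have h1 : (‖u x‖₊ : ℝ≥0∞) = ENNReal.ofReal (v i) := by
          rw [hval, ← ENNReal.ofReal_coe_nnreal, coe_nnnorm, Real.norm_of_nonneg (hv_pos i).le]
        rw [h1, ENNReal.ofReal_rpow_of_nonneg (hv_pos i).le hp0.le, hv_pow i]
        have h2 : F i x = ENNReal.ofReal ((2:ℝ) ^ (K i:ℝ)) := by
          simp only [hFdef]
          exact indicator_of_mem hi (fun _ => ENNReal.ofReal ((2:ℝ) ^ (K i:ℝ)))
        rw [← h2]
        exact ENNReal.le_tsum i
    have h3 : ∀ j : ℕ, ∫⁻ x, F j x ≤ ENNReal.ofReal (2/((j:ℝ)+1)^2) := by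
      intro j
      simp only [hFdef]
      rw [lintegral_indicator (hAnn_meas j), setLIntegral_const]
      have h4 : (2:ℝ)^(K j:ℝ) * (2:ℝ)^(-(K j:ℝ)) = 1 := by
        rw [← Real.rpow_add (by norm_num : (0:ℝ) < 2)]
        simp
      have hrp : (0:ℝ) < (2:ℝ)^(K j:ℝ) := Real.rpow_pos_of_pos (by norm_num) _
      calc ENNReal.ofReal ((2:ℝ)^(K j:ℝ)) *
            volume {x : EuclideanSpace ℝ (Fin N) | ‖x‖ ∈ Ico (R (j+1)) (R j)}
          ≤ ENNReal.ofReal ((2:ℝ)^(K j:ℝ)) * ENNReal.ofReal (T j) := by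
            apply mul_le_mul_right
            exact (measure_mono (hAnn_sub j)).trans (le_of_eq (hvol_ball j))
        _ = ENNReal.ofReal ((2:ℝ)^(K j:ℝ) * T j) := (ENNReal.ofReal_mul hrp.le).symm
        _ ≤ ENNReal.ofReal (2/((j:ℝ)+1)^2) := by
            apply ENNReal.ofReal_le_ofReal
            have h6 : (2:ℝ)^(K j:ℝ) * (2 * a j) = 2 *
                ((2:ℝ)^(K j:ℝ) * (2:ℝ)^(-(K j:ℝ))) / ((j:ℝ)+1)^2 := by
              rw [hadef]
              ring
            calc (2:ℝ)^(K j:ℝ) * T j ≤ (2:ℝ)^(K j:ℝ) * (2 * a j) := by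
                  have h7 := hT_le j
                  nlinarith
              _ = 2 * ((2:ℝ)^(K j:ℝ) * (2:ℝ)^(-(K j:ℝ))) / ((j:ℝ)+1)^2 := h6
              _ = 2/((j:ℝ)+1)^2 := by rw [h4]; ring
    have hsummable : Summable (fun j : ℕ => 2/((j:ℝ)+1)^2) := by
      have h5 : Summable (fun n : ℕ => 1/(n:ℝ)^2) :=
        Real.summable_one_div_nat_pow.mpr one_lt_two
      have h6 := (summable_nat_add_iff 1).mpr h5
      have h7 : Summable (fun n : ℕ => 1/((n:ℝ)+1)^2) := by
        exact_mod_cast h6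
      have h8 := h7.mul_left 2
      simpa only [mul_one_div] using h8
    calc ∫⁻ x, (‖u x‖₊ : ℝ≥0∞) ^ p ≤ ∫⁻ x, ∑' j : ℕ, F j x := lintegral_mono hpt
      _ = ∑' j : ℕ, ∫⁻ x, F j x := lintegral_tsum (fun j => by
          simp only [hFdef]
          exact (measurable_const.indicator (hAnn_meas j)).aemeasurable)
      _ ≤ ∑' j : ℕ, ENNReal.ofReal (2/((j:ℝ)+1)^2) := ENNReal.tsum_le_tsum h3
      _ = ENNReal.ofReal (∑' j : ℕ, 2/((j:ℝ)+1)^2) :=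
          (ENNReal.ofReal_tsum_of_nonneg (fun j => by positivity) hsummable).symm
      _ < ⊤ := ENNReal.ofReal_lt_top
  have hmem : MemLp u (ENNReal.ofReal p) volume := by
    constructor
    · exact hu_meas.aestronglyMeasurable
    · rw [eLpNorm_eq_lintegral_rpow_enorm_toReal hq0 hqt, ENNReal.toReal_ofReal hp0.le]
      exact ENNReal.rpow_lt_top_of_nonneg (by positivity) hlint.ne
  -- divergence
  have hdiv : ∫⁻ t in Ioi (0:ℝ),
      ENNReal.ofReal (A ((volume {x | t < u x}).toReal) * t ^ (p-1)) = ⊤ := by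
    set G : ℝ → ℝ≥0∞ := fun t =>
      ENNReal.ofReal (A ((volume {x | t < u x}).toReal) * t ^ (p-1)) with hGdef
    set S : ℕ → Set ℝ := fun j => Ico ((2:ℝ)^(-(1:ℝ)/p) * v (j+1)) (v (j+1)) with hSdef
    have hc_pos : (0:ℝ) < (2:ℝ)^(-(1:ℝ)/p) := Real.rpow_pos_of_pos (by norm_num) _
    have hc_lt : (2:ℝ)^(-(1:ℝ)/p) < 1 := by
      apply Real.rpow_lt_one_of_one_lt_of_neg (by norm_num : (1:ℝ) < 2)
      rw [neg_div]
      have h := one_div_pos.mpr hp0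
      linarith
    have hmul : ∀ j : ℕ, (2:ℝ)^(-(1:ℝ)/p) * v (j+1) = (2:ℝ)^(((K (j+1):ℝ) - 1)/p) := by
      intro j
      simp only [hvdef]
      rw [← Real.rpow_add (by norm_num : (0:ℝ) < 2)]
      congr 1
      ring
    have hS_sub : ∀ j : ℕ, S j ⊆ Ico (v j) (v (j+1)) := by
      intro j t htS
      refine ⟨le_trans ?_ htS.1, htS.2⟩
      rw [hmul j]
      simp only [hvdef]
      apply hrpow_mono
      have h : (K j:ℝ) + 1 ≤ K (j+1) := by exact_mod_cast hKsucc j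
      rw [div_le_div_iff₀ hp0 hp0]
      nlinarith
    have hS_pos : ∀ j : ℕ, S j ⊆ Ioi (0:ℝ) := by
      intro j t htS
      exact lt_of_lt_of_le (mul_pos hc_pos (hv_pos (j+1))) htS.1
    have hS_meas : ∀ j, MeasurableSet (S j) := fun j => measurableSet_Ico
    have hS_disj : Pairwise (Function.onFun Disjoint S) := by
      intro i j hij
      apply _root_.Set.disjoint_left.mpr
      intro t hti htj
      have h1 := hS_sub i hti
      have h2 := hS_sub j htj
      rcases lt_or_gt_of_ne hij with h | h
      · exact absurd (lt_of_lt_of_le h1.2 (hv_le (i+1) j (by omega))) (not_lt.mpr h2.1)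
      · exact absurd (lt_of_lt_of_le h2.2 (hv_le (j+1) i (by omega))) (not_lt.mpr h1.1)
    set δ : ℝ := 2⁻¹ * (1 - (2:ℝ)^(-(1:ℝ)/p)) with hδdef
    have hδ_pos : 0 < δ := by
      rw [hδdef]
      apply _root_.mul_pos (by norm_num : (0:ℝ) < 2⁻¹)
      linarith
    have hkey : ∀ j : ℕ, ENNReal.ofReal δ ≤ ∫⁻ t in S j, G t := by
      intro j
      have hGlb : ∀ t ∈ S j,
          ENNReal.ofReal (A (T (j+1)) * ((2:ℝ)^(-(1:ℝ)/p) * v (j+1)) ^ (p-1)) ≤ G t := by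
        intro t htS
        have hμj : G t = ENNReal.ofReal (A (T (j+1)) * t ^ (p-1)) := by
          simp only [hGdef]
          rw [hμ j t (hS_sub j htS)]
        rw [hμj]
        apply ENNReal.ofReal_le_ofReal
        apply mul_le_mul_of_nonneg_left _ (hA_pos (T (j+1)) (hT_pos (j+1))).le
        apply Real.rpow_le_rpow (mul_pos hc_pos (hv_pos (j+1))).le htS.1 (by linarith)
      have hvolS : volume (S j) = ENNReal.ofReal (v (j+1) * (1 - (2:ℝ)^(-(1:ℝ)/p))) := by
        simp only [hSdef]
        rw [Real.volume_Ico]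
        congr 1
        ring
      have hA_ge : (2:ℝ)^(-(K (j+1):ℝ)) ≤ A (T (j+1)) := by
        have h6 : (2:ℝ)^(-(K (j+1):ℝ)) = a (j+1) * (((j+1:ℕ):ℝ)+1)^2 := by
          simp only [hadef]
          exact (div_mul_cancel₀ _ (by positivity : ((((j+1:ℕ):ℝ))+1)^2 ≠ 0)).symm
        rw [h6]
        calc a (j+1) * (((j+1:ℕ):ℝ)+1)^2 ≤ a (j+1) * φ (a (j+1)) :=
              mul_le_mul_of_nonneg_left (hφa (j+1)) (ha_pos (j+1)).le
          _ ≤ A (a (j+1)) := hA_lb (a (j+1)) (ha_pos (j+1))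
          _ ≤ A (T (j+1)) := hA_mono (a (j+1)) (T (j+1)) (ha_pos (j+1)) (hT_ge (j+1))
      have hprod : (2:ℝ)^(-(K (j+1):ℝ)) * (2:ℝ)^(((K (j+1):ℝ)-1)*(p-1)/p) *
          (2:ℝ)^((K (j+1):ℝ)/p) = (2:ℝ)^(-(p-1)/p) := by
        rw [← Real.rpow_add (by norm_num : (0:ℝ) < 2),
          ← Real.rpow_add (by norm_num : (0:ℝ) < 2)]
        congr 1
        field_simp
        ring
      have hreal : δ ≤ A (T (j+1)) * ((2:ℝ)^(-(1:ℝ)/p) * v (j+1)) ^ (p-1) *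
          (v (j+1) * (1 - (2:ℝ)^(-(1:ℝ)/p))) := by
        have hQp : (0:ℝ) < (2:ℝ)^((K (j+1):ℝ)/p) := Real.rpow_pos_of_pos (by norm_num) _
        have hX : (0:ℝ) < (2:ℝ)^(((K (j+1):ℝ)-1)*(p-1)/p) :=
          Real.rpow_pos_of_pos (by norm_num) _
        have h1c : (0:ℝ) ≤ 1 - (2:ℝ)^(-(1:ℝ)/p) := by linarith
        have hc1 : ((2:ℝ)^(-(1:ℝ)/p) * v (j+1)) ^ (p-1) =
            (2:ℝ)^(((K (j+1):ℝ)-1)*(p-1)/p) := by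
          rw [hmul j, ← Real.rpow_mul (by norm_num : (0:ℝ) ≤ 2)]
          congr 1
          ring
        rw [hc1]
        simp only [hvdef]
        calc δ = (2:ℝ)^(-(1:ℝ)) * (1 - (2:ℝ)^(-(1:ℝ)/p)) := by
              rw [hδdef, Real.rpow_neg_one]
          _ ≤ (2:ℝ)^(-(p-1)/p) * (1 - (2:ℝ)^(-(1:ℝ)/p)) := by
              apply mul_le_mul_of_nonneg_right _ h1c
              apply hrpow_mono
              rw [neg_div]
              have h9 : (p-1)/p ≤ 1 := by
                rw [div_le_one hp0]
                linarith
              linarith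
          _ = (2:ℝ)^(-(K (j+1):ℝ)) * (2:ℝ)^(((K (j+1):ℝ)-1)*(p-1)/p) *
              ((2:ℝ)^((K (j+1):ℝ)/p) * (1 - (2:ℝ)^(-(1:ℝ)/p))) := by
              rw [← hprod]
              ring
          _ ≤ A (T (j+1)) * (2:ℝ)^(((K (j+1):ℝ)-1)*(p-1)/p) *
              ((2:ℝ)^((K (j+1):ℝ)/p) * (1 - (2:ℝ)^(-(1:ℝ)/p))) := by
              apply mul_le_mul_of_nonneg_right _ (mul_nonneg hQp.le h1c)
              exact mul_le_mul_of_nonneg_right hA_ge hX.le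
      have hfac : (0:ℝ) ≤ A (T (j+1)) * ((2:ℝ)^(-(1:ℝ)/p) * v (j+1)) ^ (p-1) :=
        mul_nonneg (hA_pos (T (j+1)) (hT_pos (j+1))).le
          (Real.rpow_nonneg (mul_pos hc_pos (hv_pos (j+1))).le _)
      have h5 : ENNReal.ofReal (A (T (j+1)) * ((2:ℝ)^(-(1:ℝ)/p) * v (j+1)) ^ (p-1)) *
          volume (S j) ≤ ∫⁻ t in S j, G t := by
        rw [← setLIntegral_const (S j)
          (ENNReal.ofReal (A (T (j+1)) * ((2:ℝ)^(-(1:ℝ)/p) * v (j+1)) ^ (p-1)))]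
        rw [← lintegral_indicator (hS_meas j), ← lintegral_indicator (hS_meas j)]
        apply lintegral_mono
        intro t
        by_cases htS : t ∈ S j
        · rw [indicator_of_mem htS, indicator_of_mem htS]
          exact hGlb t htS
        · rw [indicator_of_notMem htS, indicator_of_notMem htS]
      calc ENNReal.ofReal δ
          ≤ ENNReal.ofReal (A (T (j+1)) * ((2:ℝ)^(-(1:ℝ)/p) * v (j+1)) ^ (p-1) *
            (v (j+1) * (1 - (2:ℝ)^(-(1:ℝ)/p)))) := ENNReal.ofReal_le_ofReal hreal
        _ = ENNReal.ofReal (A (T (j+1)) * ((2:ℝ)^(-(1:ℝ)/p) * v (j+1)) ^ (p-1)) *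
            ENNReal.ofReal (v (j+1) * (1 - (2:ℝ)^(-(1:ℝ)/p))) := ENNReal.ofReal_mul hfac
        _ = ENNReal.ofReal (A (T (j+1)) * ((2:ℝ)^(-(1:ℝ)/p) * v (j+1)) ^ (p-1)) *
            volume (S j) := by rw [hvolS]
        _ ≤ ∫⁻ t in S j, G t := h5
    have h7 : (∑' j : ℕ, ∫⁻ t in S j, G t) ≤ ∫⁻ t in Ioi (0:ℝ), G t := by
      rw [← lintegral_iUnion hS_meas hS_disj G]
      exact lintegral_mono_set (iUnion_subset hS_pos)
    have h8 : (⊤:ℝ≥0∞) ≤ ∑' j : ℕ, ∫⁻ t in S j, G t := by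
      have h9 : (∑' _ : ℕ, ENNReal.ofReal δ) = ⊤ :=
        ENNReal.tsum_const_eq_top_of_ne_zero (by
          simp only [ne_eq, ENNReal.ofReal_eq_zero, not_le]
          exact hδ_pos)
      rw [← h9]
      exact ENNReal.tsum_le_tsum hkey
    exact top_le_iff.mp (le_trans h8 h7)
  refine ⟨u, hu_meas, hu_zero, hmem, ?_⟩
  rw [hdiv, ENNReal.mul_top hq0]
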